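/- Let A = (a_{ij}) be an n-by-n Ferrers matrix with a_{nn} = 0, let k ≥ 1 be the number of 0's in the last column of A, and let A° be the (n−1)-by-(n−1) matrix obtained from A by deleting its last row and last column. Then, with α an indeterminate, per(B(A); α) = (α + k − 1)·x_n·per(B(A°); α) + x_n·y_n·∂ per(B(A°); α), where ∂ = Σ_{i=1}^{n−k} ∂/∂x_i + Σ_{j=1}^{n−1} ∂/∂y_j. -/

import Mathlib

open MvPolynomial

/-- The number of cycles of a permutation (fixed points included). -/
def cyc {n : ℕ} (σ : Equiv.Perm (Fin n)) : ℕ :=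
  σ.cycleType.card + (Finset.univ.filter fun i : Fin n => σ i = i).card

/-- The `α`-permanent of a square matrix: `Σ_σ α^{cyc(σ)} Π_i h_{i,σ(i)}`. -/
noncomputable def permAlpha {n : ℕ} {R : Type*} [CommRing R]
    (H : Matrix (Fin n) (Fin n) R) (α : R) : R :=
  ∑ σ : Equiv.Perm (Fin n), α ^ cyc σ * ∏ i : Fin n, H i (σ i)

/-- A Ferrers matrix: a `{0,1}`-matrix weakly decreasing down columns and
weakly increasing from left to right across rows. -/
def Ferrers {m n : ℕ} (A : Matrix (Fin m) (Fin n) ℝ) : Prop :=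
  (∀ i j, A i j = 0 ∨ A i j = 1) ∧
  (∀ i i' j, i ≤ i' → A i' j ≤ A i j) ∧
  (∀ i j j', j ≤ j' → A i j ≤ A i j')

/-- The matrix `B(A;x;y)` with entries `b_{ij} = a_{ij} y_j + (1 - a_{ij}) x_i`,
where `Sum.inl i` is the row variable `x_i` and `Sum.inr j` is the column
variable `y_j`. -/
noncomputable def Bmat {m n : ℕ} (A : Matrix (Fin m) (Fin n) ℝ) :
    Matrix (Fin m) (Fin n) (MvPolynomial (Fin m ⊕ Fin n) ℝ) :=
  fun i j => MvPolynomial.C (A i j) * MvPolynomial.X (Sum.inr j) +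
    MvPolynomial.C (1 - A i j) * MvPolynomial.X (Sum.inl i)

/-!
Write each permutation of `{1, …, n}` as `(n p) ∘ σ'`, where `σ'` extends a permutation `σ`
of `{1, …, n-1}`: either `n` becomes a new fixed point (`p = n`, one more cycle) or it is inserted
into a cycle of `σ` right after some `r` (same number of cycles). As `a_{nn} = 0`, the last row
of `B(A)` is `x_n` throughout. For `r < n` the entry `b_{rn}` is `y_n` if `a_{rn} = 1`, while if
`a_{rn} = 0` the whole row `r` vanishes and `b_{rn} = x_r = b_{r,σ r}`. Since `∂` maps each
`b_{rj}` with `j < n` to `a_{rn}`, the Leibniz rule turns the sum over `r` into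
`y_n ∂ Π_l b_{l,σ l} + (k - 1) Π_l b_{l,σ l}`.
-/

open Equiv Finset

namespace Equiv.Perm

section SwapMul

variable {β : Type*} [DecidableEq β] {σ : Perm β} {a p : β}

theorem disjoint_swap_of_apply_eq_self {τ : Perm β} (ha : τ a = a) (hp : τ p = p) :
    (swap a p).Disjoint τ := fun x => by
  by_cases hx : x = a ∨ x = p
  · rcases hx with rfl | rfl <;> simp [ha, hp]
  · push Not at hx
    exact Or.inl (swap_apply_of_ne_of_ne hx.1 hx.2)

variable [Fintype β]

theorem isCycle_swap_mul_cycleOf (ha : σ a = a) (hp : σ p ≠ p) :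
    (swap a p * σ.cycleOf p).IsCycle := by
  have hpsupp : p ∈ σ.support := mem_support.2 hp
  obtain ⟨t, ht⟩ : ∃ t, σ.toList p = p :: t := by
    cases hl : σ.toList p with
    | nil => exact absurd hl (by simpa [toList_eq_nil_iff] using hpsupp)
    | cons q t => exact ⟨t, by simpa [hl] using toList_getElem_zero σ p hpsupp⟩
  have ha_notMem : a ∉ p :: t := by
    rw [← ht, mem_toList_iff]
    exact fun h => hp (h.1.symm.apply_eq_self_iff.1 ha)
  rw [← formPerm_toList, ht, ← List.formPerm_cons_cons]
  exact List.isCycle_formPerm (List.nodup_cons.2 ⟨ha_notMem, ht ▸ σ.nodup_toList p⟩)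
    (by simp)

theorem card_cycleType_swap_mul_of_apply_ne (ha : σ a = a) (hp : σ p ≠ p) :
    (swap a p * σ).cycleType.card = σ.cycleType.card := by
  set c := σ.cycleOf p
  have hd : (σ * c⁻¹).Disjoint c :=
    disjoint_mul_inv_of_mem_cycleFactorsFinset
      (cycleOf_mem_cycleFactorsFinset_iff.2 (mem_support.2 hp))
  have hca : c a = a := by simp [c, cycleOf_apply, ha]
  have hswap : (swap a p).Disjoint (σ * c⁻¹) := disjoint_swap_of_apply_eq_self
    (by rw [mul_apply, inv_eq_iff_eq.2 hca.symm, ha])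
    ((hd p).resolve_right (by simpa [c] using hp))
  -- only the cycle `c` through `p` changes: `a` is inserted into it
  have hsplit : swap a p * σ = (σ * c⁻¹) * (swap a p * c) := by
    rw [← mul_assoc, ← hswap.commute.eq, mul_assoc, inv_mul_cancel_right]
  have hσ : σ.cycleType = (σ * c⁻¹).cycleType + c.cycleType := by
    rw [← hd.cycleType_mul, inv_mul_cancel_right]
  rw [hsplit, (hswap.symm.mul_right hd).cycleType_mul, hσ, Multiset.card_add,
    Multiset.card_add, (isCycle_swap_mul_cycleOf ha hp).cycleType,
    (σ.isCycle_cycleOf hp).cycleType]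
  rfl

theorem card_cycleType_swap_mul_of_apply_eq (ha : σ a = a) (hp : σ p = p) (hap : a ≠ p) :
    (swap a p * σ).cycleType.card = σ.cycleType.card + 1 := by
  rw [(disjoint_swap_of_apply_eq_self ha hp).cycleType_mul, Multiset.card_add,
    (isCycle_swap hap).cycleType, add_comm]
  rfl

theorem filter_swap_mul_apply_eq_self (ha : σ a = a) (hap : a ≠ p) :
    univ.filter (fun x => (swap a p * σ) x = x) = univ.filter (fun x => σ x = x) \ {a, p} := by
  ext x
  simp only [mem_filter, mem_univ, true_and, mem_sdiff, mem_insert, mem_singleton, coe_mul,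
    Function.comp_apply]
  have := σ.injective.eq_iff (a := x) (b := a)
  grind

end SwapMul

variable {m : ℕ}

def extendLast (σ : Perm (Fin m)) : Perm (Fin (m + 1)) :=
  σ.viaFintypeEmbedding Fin.castSuccEmb

@[simp]
theorem extendLast_castSucc (σ : Perm (Fin m)) (i : Fin m) :
    σ.extendLast i.castSucc = (σ i).castSucc :=
  viaFintypeEmbedding_apply_image σ Fin.castSuccEmb i

@[simp]
theorem extendLast_last (σ : Perm (Fin m)) : σ.extendLast (Fin.last m) = Fin.last m :=
  viaFintypeEmbedding_apply_notMem_range σ Fin.castSuccEmb (by simp)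

theorem extendLast_injective : Function.Injective (extendLast (m := m)) := fun σ τ h =>
  ext fun i => Fin.castSucc_injective m <| by simpa using congr($h i.castSucc)

theorem bijective_swap_last_mul_extendLast :
    Function.Bijective fun pσ : Fin (m + 1) × Perm (Fin m) =>
      swap (Fin.last m) pσ.1 * pσ.2.extendLast := by
  rw [Fintype.bijective_iff_injective_and_card]
  refine ⟨fun ⟨p, σ⟩ ⟨q, τ⟩ h => ?_, by simp [Fintype.card_perm, Nat.factorial_succ]⟩
  obtain rfl : p = q := by simpa using congr($h (Fin.last m))
  simpa using extendLast_injective (mul_left_cancel h)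

end Equiv.Perm

theorem cyc_swap_mul_add_one {n : ℕ} {σ : Perm (Fin n)} {a p : Fin n} (ha : σ a = a)
    (hap : a ≠ p) : cyc (swap a p * σ) + 1 = cyc σ := by
  unfold cyc
  rw [Perm.filter_swap_mul_apply_eq_self ha hap]
  by_cases hp : σ p = p
  · have hsub : {a, p} ⊆ univ.filter (fun x => σ x = x) := by
      simp [insert_subset_iff, ha, hp]
    have hcard := card_le_card hsub
    rw [card_pair hap] at hcard
    rw [Perm.card_cycleType_swap_mul_of_apply_eq ha hp hap, card_sdiff_of_subset hsub,
      card_pair hap]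
    omega
  · have hfix : univ.filter (fun x => σ x = x) \ {a, p} =
        (univ.filter (fun x => σ x = x)).erase a := by
      ext x
      simp only [mem_sdiff, mem_erase, mem_filter, mem_insert, mem_singleton]
      grind
    have hcard : 0 < #(univ.filter (fun x => σ x = x)) := card_pos.2 ⟨a, by simpa⟩
    rw [Perm.card_cycleType_swap_mul_of_apply_ne ha hp, hfix, card_erase_of_mem (by simpa)]
    omega

theorem cyc_extendLast {m : ℕ} (σ : Perm (Fin m)) : cyc σ.extendLast = cyc σ + 1 := by
  have hfix : (univ.filter fun i => σ.extendLast i = i) =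
      (univ.filter fun i => σ i = i).map Fin.castSuccEmb ∪ {Fin.last m} := by
    ext i
    induction i using Fin.lastCases <;> simp
  unfold cyc
  rw [hfix, card_union_of_disjoint (by simp [Fin.castSucc_ne_last]), card_map, card_singleton,
    Perm.extendLast, Perm.viaFintypeEmbedding, Perm.cycleType_extendDomain, add_assoc]

theorem cyc_swap_last_mul_extendLast {m : ℕ} (σ : Perm (Fin m)) (q : Fin m) :
    cyc (swap (Fin.last m) q.castSucc * σ.extendLast) = cyc σ := by
  have := cyc_swap_mul_add_one σ.extendLast_last (Fin.castSucc_ne_last q).symm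
  rw [cyc_extendLast] at this
  omega

section AlphaPermanent

variable {m : ℕ} {R : Type*} [CommRing R]

theorem prod_swap_last_mul_extendLast_apply (H : Matrix (Fin (m + 1)) (Fin (m + 1)) R)
    (σ : Perm (Fin m)) (r : Fin m) :
    ∏ i, H i ((swap (Fin.last m) (σ r).castSucc * σ.extendLast) i) =
      H r.castSucc (Fin.last m) * H (Fin.last m) (σ r).castSucc *
        ∏ l ∈ univ.erase r, H l.castSucc (σ l).castSucc := by
  set τ := swap (Fin.last m) (σ r).castSucc * σ.extendLast
  rw [Fin.prod_univ_castSucc, ← mul_prod_erase univ (fun i => H i.castSucc (τ i.castSucc))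
    (mem_univ r), mul_right_comm]
  congr 1
  · simp [τ]
  · refine prod_congr rfl fun l hl => ?_
    have hne : (σ l).castSucc ≠ (σ r).castSucc := by simpa using ne_of_mem_erase hl
    simp [τ, swap_apply_of_ne_of_ne (Fin.castSucc_ne_last _) hne]

/-- Expansion of the `α`-permanent along the last index: `m + 1` is either a fixed point
(contributing a new cycle) or inserted into a cycle of `σ` right after `r`. -/
theorem permAlpha_succ (H : Matrix (Fin (m + 1)) (Fin (m + 1)) R) (α : R) :
    permAlpha H α = ∑ σ : Perm (Fin m), α ^ cyc σ *
      (α * H (Fin.last m) (Fin.last m) * ∏ i, H i.castSucc (σ i).castSucc +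
        ∑ r, H r.castSucc (Fin.last m) * H (Fin.last m) (σ r).castSucc *
          ∏ l ∈ univ.erase r, H l.castSucc (σ l).castSucc) := by
  rw [permAlpha, ← Perm.bijective_swap_last_mul_extendLast.sum_comp, Fintype.sum_prod_type,
    sum_comm]
  refine sum_congr rfl fun σ _ => ?_
  rw [Fin.sum_univ_castSucc, ← Equiv.sum_comp σ, mul_add, mul_sum, add_comm]
  congr 1
  · simp only [swap_self, ← Perm.one_def, one_mul, cyc_extendLast, Fin.prod_univ_castSucc,
      Perm.extendLast_castSucc, Perm.extendLast_last]
    ring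
  · refine sum_congr rfl fun r _ => ?_
    rw [cyc_swap_last_mul_extendLast, prod_swap_last_mul_extendLast_apply]

theorem map_permAlpha {S F : Type*} [CommRing S] [FunLike F R S] [RingHomClass F R S] (f : F)
    (H : Matrix (Fin m) (Fin m) R) (α : R) :
    f (permAlpha H α) = permAlpha (H.map f) (f α) := by
  simp [permAlpha, map_sum, map_prod]

end AlphaPermanent

namespace Derivation

variable {R A M ι : Type*} [CommSemiring R] [CommSemiring A] [AddCommMonoid M] [Algebra R A]
  [Module A M] [Module R M]

theorem sum_apply (s : Finset ι) (d : ι → Derivation R A M) (a : A) :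
    (∑ i ∈ s, d i) a = ∑ i ∈ s, d i a := by
  induction s using Finset.cons_induction <;> simp [*, add_apply]

theorem leibniz_prod [DecidableEq ι] (D : Derivation R A M) (s : Finset ι) (f : ι → A) :
    D (∏ i ∈ s, f i) = ∑ i ∈ s, (∏ j ∈ s.erase i, f j) • D (f i) := by
  induction s using Finset.induction_on with
  | empty => simp
  | insert a s ha ih =>
    rw [prod_insert ha, D.leibniz, ih, sum_insert ha, erase_insert ha, smul_sum, add_comm]
    congr 1
    refine sum_congr rfl fun i hi => ?_
    rw [erase_insert_of_ne (ne_of_mem_of_not_mem hi ha).symm,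
      prod_insert fun h => ha (mem_of_mem_erase h), mul_smul]

end Derivation

theorem Fin.sub_card_filter_le_iff {n : ℕ} {p : Fin n → Prop} [DecidablePred p]
    (hp : Monotone p) (i : Fin n) : n - #(univ.filter p) ≤ i ↔ p i := by
  refine ⟨fun hi => by_contra fun hpi => ?_, fun hpi => ?_⟩
  · have := card_le_card (s := univ.filter p) (t := Ioi i) fun j hj =>
      mem_Ioi.2 (lt_of_not_ge fun hji => hpi (hp hji (mem_filter.1 hj).2))
    rw [Fin.card_Ioi] at this
    omega
  · have := card_le_card (s := Ici i) (t := univ.filter p) fun j hj =>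
      mem_filter.2 ⟨mem_univ j, hp (mem_Ici.1 hj) hpi⟩
    rw [Fin.card_Ici] at this
    omega

namespace Ferrers

variable {m n : ℕ} {A : Matrix (Fin m) (Fin n) ℝ}

theorem row_eq_zero_of_le (hA : Ferrers A) {i : Fin m} {j j' : Fin n} (hj : j ≤ j')
    (h : A i j' = 0) : A i j = 0 :=
  (hA.1 i j).resolve_right fun h1 => by linarith [hA.2.2 i j j' hj]

theorem col_eq_zero_of_le (hA : Ferrers A) {i i' : Fin m} {j : Fin n} (hi : i ≤ i')
    (h : A i j = 0) : A i' j = 0 :=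
  (hA.1 i' j).resolve_right fun h1 => by linarith [hA.2.1 i i' j hi]

theorem sub_card_zeros_le_iff (hA : Ferrers A) (i : Fin m) (j : Fin n) :
    m - #(univ.filter fun i => A i j = 0) ≤ i ↔ A i j = 0 :=
  Fin.sub_card_filter_le_iff (fun _ _ hi => hA.col_eq_zero_of_le hi) i

theorem sum_one_sub_eq_card_zeros (hA : Ferrers A) (j : Fin n) :
    ∑ i, (1 - A i j) = #(univ.filter fun i => A i j = 0) := by
  rw [natCast_card_filter]
  refine sum_congr rfl fun i _ => ?_
  rcases hA.1 i j with h | h <;> simp [h]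

theorem sum_castSucc_one_sub_eq {A : Matrix (Fin (m + 1)) (Fin n) ℝ} (hA : Ferrers A) {j : Fin n}
    (hlast : A (Fin.last m) j = 0) :
    ∑ r : Fin m, (1 - A r.castSucc j) = #(univ.filter fun i => A i j = 0) - 1 := by
  rw [← hA.sum_one_sub_eq_card_zeros, Fin.sum_univ_castSucc, hlast]
  ring

end Ferrers

section Bmat

variable {m n : ℕ} {A : Matrix (Fin m) (Fin n) ℝ}

theorem Bmat_apply_of_eq_zero {i : Fin m} {j : Fin n} (h : A i j = 0) :
    Bmat A i j = X (Sum.inl i) := by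
  simp [Bmat, h]

theorem Bmat_apply_of_eq_one {i : Fin m} {j : Fin n} (h : A i j = 1) :
    Bmat A i j = X (Sum.inr j) := by
  simp [Bmat, h]

theorem Bmat_submatrix {m' n' : ℕ} (f : Fin m' → Fin m) (g : Fin n' → Fin n) :
    (Bmat fun i j => A (f i) (g j)).map (rename (Sum.map f g)) = (Bmat A).submatrix f g := by
  ext i j
  simp [Bmat]

theorem Ferrers.Bmat_apply_of_apply_last_eq_zero {A : Matrix (Fin m) (Fin (n + 1)) ℝ}
    (hA : Ferrers A) {i : Fin m} (h : A i (Fin.last n) = 0) (j : Fin (n + 1)) :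
    Bmat A i j = X (Sum.inl i) :=
  Bmat_apply_of_eq_zero (hA.row_eq_zero_of_le (Fin.le_last j) h)

theorem Ferrers.Bmat_apply_last {A : Matrix (Fin m) (Fin (n + 1)) ℝ} (hA : Ferrers A)
    (D : Derivation ℝ (MvPolynomial (Fin m ⊕ Fin (n + 1)) ℝ)
      (MvPolynomial (Fin m ⊕ Fin (n + 1)) ℝ))
    (i : Fin m) (j : Fin (n + 1)) (hx : D (X (Sum.inl i)) = C (A i (Fin.last n)))
    (hy : D (X (Sum.inr j)) = 1) :
    Bmat A i (Fin.last n) =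
      X (Sum.inr (Fin.last n)) * D (Bmat A i j) + C (1 - A i (Fin.last n)) * Bmat A i j := by
  rcases hA.1 i (Fin.last n) with h | h
  · simp [hA.Bmat_apply_of_apply_last_eq_zero h, hx, h]
  · rcases hA.1 i j with h' | h' <;>
      simp [Bmat_apply_of_eq_one h, Bmat_apply_of_eq_zero, Bmat_apply_of_eq_one, h, h', hx, hy]

theorem Ferrers.sum_Bmat_last_mul_prod_erase {ι : Type*} [Fintype ι] [DecidableEq ι]
    {A : Matrix (Fin m) (Fin (n + 1)) ℝ} (hA : Ferrers A)
    (D : Derivation ℝ (MvPolynomial (Fin m ⊕ Fin (n + 1)) ℝ)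
      (MvPolynomial (Fin m ⊕ Fin (n + 1)) ℝ))
    (ρ : ι → Fin m) (c : ι → Fin (n + 1))
    (hx : ∀ r, D (X (Sum.inl (ρ r))) = C (A (ρ r) (Fin.last n)))
    (hy : ∀ r, D (X (Sum.inr (c r))) = 1) :
    ∑ r, Bmat A (ρ r) (Fin.last n) * ∏ l ∈ univ.erase r, Bmat A (ρ l) (c l) =
      X (Sum.inr (Fin.last n)) * D (∏ l, Bmat A (ρ l) (c l)) +
        C (∑ r, (1 - A (ρ r) (Fin.last n))) * ∏ l, Bmat A (ρ l) (c l) := by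
  calc ∑ r, Bmat A (ρ r) (Fin.last n) * ∏ l ∈ univ.erase r, Bmat A (ρ l) (c l)
      = ∑ r, (X (Sum.inr (Fin.last n)) * D (Bmat A (ρ r) (c r)) +
          C (1 - A (ρ r) (Fin.last n)) * Bmat A (ρ r) (c r)) *
            ∏ l ∈ univ.erase r, Bmat A (ρ l) (c l) :=
        sum_congr rfl fun r _ => by rw [hA.Bmat_apply_last D _ _ (hx r) (hy r)]
    _ = X (Sum.inr (Fin.last n)) *
            ∑ r, (∏ l ∈ univ.erase r, Bmat A (ρ l) (c l)) • D (Bmat A (ρ r) (c r)) +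
          ∑ r, C (1 - A (ρ r) (Fin.last n)) * ∏ l, Bmat A (ρ l) (c l) := by
        rw [mul_sum, ← sum_add_distrib]
        refine sum_congr rfl fun r _ => ?_
        rw [smul_eq_mul, ← mul_prod_erase univ (fun l => Bmat A (ρ l) (c l)) (mem_univ r)]
        ring
    _ = _ := by rw [← D.leibniz_prod, ← sum_mul, ← map_sum]

end Bmat

/-- Here `α` ranges over `ℝ`; since both sides are polynomial in `α`, this is the identity for
an indeterminate `α`. -/
theorem alpha_diff_recurrence_general (m : ℕ) (A : Matrix (Fin (m + 1)) (Fin (m + 1)) ℝ)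
    (hA : Ferrers A) (hlast : A (Fin.last m) (Fin.last m) = 0)
    (k : ℕ)
    (hk : k = (Finset.univ.filter (fun i : Fin (m + 1) => A i (Fin.last m) = 0)).card) :
    ∀ α : ℝ,
      ∀ P : MvPolynomial (Fin (m + 1) ⊕ Fin (m + 1)) ℝ,
        P = MvPolynomial.rename (Sum.map Fin.castSucc Fin.castSucc)
            (permAlpha (Bmat (fun i j : Fin m => A i.castSucc j.castSucc))
              (MvPolynomial.C α)) →
      permAlpha (Bmat A) (MvPolynomial.C α) =
        MvPolynomial.C (α + (k : ℝ) - 1) * MvPolynomial.X (Sum.inl (Fin.last m)) * P +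
          MvPolynomial.X (Sum.inl (Fin.last m)) * MvPolynomial.X (Sum.inr (Fin.last m)) *
            ((∑ i ∈ Finset.univ.filter (fun i : Fin (m + 1) => (i : ℕ) < m + 1 - k),
                MvPolynomial.pderiv (Sum.inl i) P) +
              ∑ j : Fin m, MvPolynomial.pderiv (Sum.inr j.castSucc) P) := by
  intro α P hP
  set D := ∑ i ∈ univ.filter (fun i : Fin (m + 1) => (i : ℕ) < m + 1 - k),
      pderiv (Sum.inl i) + ∑ j : Fin m, pderiv (R := ℝ) (Sum.inr j.castSucc)
  have hDx (i : Fin (m + 1)) : D (X (Sum.inl i)) = C (A i (Fin.last m)) := by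
    have hS : (i : ℕ) < m + 1 - k ↔ A i (Fin.last m) ≠ 0 := by
      rw [← not_le, hk, hA.sub_card_zeros_le_iff]
    rcases hA.1 i (Fin.last m) with h | h <;>
      simp [D, Derivation.sum_apply, pderiv_X, Pi.single_apply, hS, h]
  have hDy (j : Fin m) : D (X (Sum.inr j.castSucc)) = 1 := by
    simp [D, Derivation.sum_apply, pderiv_X, Pi.single_apply]
  have hP' :
      P = ∑ σ : Perm (Fin m), C α ^ cyc σ * ∏ i, Bmat A i.castSucc (σ i).castSucc := by
    rw [hP, map_permAlpha, rename_C, Bmat_submatrix]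
    rfl
  have hD (Q : MvPolynomial (Fin (m + 1) ⊕ Fin (m + 1)) ℝ) :
      (∑ i ∈ univ.filter (fun i : Fin (m + 1) => (i : ℕ) < m + 1 - k), pderiv (Sum.inl i) Q) +
        ∑ j : Fin m, pderiv (Sum.inr j.castSucc) Q = D Q := by
    simp [D, Derivation.add_apply, Derivation.sum_apply]
  rw [permAlpha_succ, hD, hP', map_sum, mul_sum, mul_sum, ← sum_add_distrib]
  refine sum_congr rfl fun σ _ => ?_
  simp only [hA.Bmat_apply_of_apply_last_eq_zero hlast, mul_right_comm _ (X (Sum.inl (Fin.last m))),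
    ← sum_mul]
  rw [hA.sum_Bmat_last_mul_prod_erase D Fin.castSucc (fun l => (σ l).castSucc) (fun _ => hDx _)
      (fun _ => hDy _), hA.sum_castSucc_one_sub_eq hlast, ← hk, D.leibniz, ← C_pow,
    derivation_C, smul_zero, add_zero, smul_eq_mul]
  simp only [map_sub, map_add, map_one, C_pow]
  ring

/-- Differential recurrence for the `α`-permanent: if `A` is an `n × n` Ferrers
matrix (`n = m+1`) with `a_{nn} = 0`, `k` is the number of `0`'s in the last
column, and `A°` is obtained by deleting the last row and column, then
`per(B(A);α) = (α + k - 1) xₙ per(B(A°);α) + xₙ yₙ ∂ per(B(A°);α)`, where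
`∂ = Σ_{i=1}^{n-k} ∂/∂x_i + Σ_{j=1}^{n-1} ∂/∂y_j` (stated for all real `α`,
which is equivalent to the identity with `α` an indeterminate). -/
theorem alpha_diff_recurrence (m : ℕ) (A : Matrix (Fin (m + 1)) (Fin (m + 1)) ℝ)
    (hA : Ferrers A) (hlast : A (Fin.last m) (Fin.last m) = 0)
    (k : ℕ)
    (hk : k = (Finset.univ.filter (fun i : Fin (m + 1) => A i (Fin.last m) = 0)).card)
    (hk1 : 1 ≤ k) :
    ∀ α : ℝ,
      ∀ P : MvPolynomial (Fin (m + 1) ⊕ Fin (m + 1)) ℝ,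
        P = MvPolynomial.rename (Sum.map Fin.castSucc Fin.castSucc)
            (permAlpha (Bmat (fun i j : Fin m => A i.castSucc j.castSucc))
              (MvPolynomial.C α)) →
      permAlpha (Bmat A) (MvPolynomial.C α) =
        MvPolynomial.C (α + (k : ℝ) - 1) * MvPolynomial.X (Sum.inl (Fin.last m)) * P +
          MvPolynomial.X (Sum.inl (Fin.last m)) * MvPolynomial.X (Sum.inr (Fin.last m)) *
            ((∑ i ∈ Finset.univ.filter (fun i : Fin (m + 1) => (i : ℕ) < m + 1 - k),
                MvPolynomial.pderiv (Sum.inl i) P) +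
              ∑ j : Fin m, MvPolynomial.pderiv (Sum.inr j.castSucc) P) :=
  alpha_diff_recurrence_general m A hA hlast k hk
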